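/- arXiv:1311.2050 — 3 statements merged into one kernel-verified Lean document; each statement's English description precedes it below -/
import Mathlib

section
/- Let V be the F₂-vector space with basis S = {a,b,c,d,w,x,y,z} and position function pos : S → ℤ×ℤ given by pos(z)=(0,0), pos(x)=(0,1), pos(y)=(1,0), pos(w)=(1,1), pos(d)=(2,2), pos(b)=(2,3), pos(c)=(3,2), pos(a)=(3,3). For A,B,C,D ∈ F₂ let ∂ : V → V be the linear map with ∂w = x+y, ∂x = z, ∂y = z, ∂z = 0, ∂a = b+c+A·x+B·y, ∂b = d+C·z, ∂c = d+D·z, ∂d = 0. If ∂∘∂ = 0, then there exists a filtered basis change φ of V such that φ⁻¹∘∂∘φ equals the differential ∂₀ with parameters A = B = C = D = 0. -/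
/-- The standard basis vector of `Fin n → ZMod 2` at index `i`. -/
def stdBasis {n : ℕ} (i : Fin n) : Fin n → ZMod 2 := Pi.single i 1

/-- A linear automorphism `φ` of `Fin n → ZMod 2` is a *filtered basis change*
(with respect to the position function `pos : Fin n → ℤ × ℤ`) if for every basis
element `g`, `φ(g) − g` lies in the span of the basis elements `h ≠ g` with
`pos h ≤ pos g` in both coordinates (componentwise order on `ℤ × ℤ`). -/
def FilteredBasisChange {n : ℕ} (pos : Fin n → ℤ × ℤ)
    (φ : (Fin n → ZMod 2) ≃ₗ[ZMod 2] (Fin n → ZMod 2)) : Prop :=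
  ∀ g : Fin n, φ (stdBasis g) - stdBasis g ∈
    Submodule.span (ZMod 2)
      {v : Fin n → ZMod 2 | ∃ h : Fin n, h ≠ g ∧ pos h ≤ pos g ∧ v = stdBasis h}

/-- Position function for the basis {a,b,c,d,w,x,y,z} (indices a=0, b=1, c=2, d=3,
w=4, x=5, y=6, z=7): pos(a)=(3,3), pos(b)=(2,3), pos(c)=(3,2), pos(d)=(2,2),
pos(w)=(1,1), pos(x)=(0,1), pos(y)=(1,0), pos(z)=(0,0). -/
def pos8 : Fin 8 → ℤ × ℤ :=
  ![(3,3), (2,3), (3,2), (2,2), (1,1), (0,1), (1,0), (0,0)]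


/-- The filtered change of basis: a ↦ a+(A+C)w, b ↦ b+Cx, c ↦ c+Dy, rest fixed. -/
def fmap (A C D : ZMod 2) : (Fin 8 → ZMod 2) →ₗ[ZMod 2] (Fin 8 → ZMod 2) :=
  LinearMap.id + (LinearMap.proj 0).smulRight ((A + C) • stdBasis 4)
    + (LinearMap.proj 1).smulRight (C • stdBasis 5)
    + (LinearMap.proj 2).smulRight (D • stdBasis 6)

theorem fmap0 (A C D : ZMod 2) : fmap A C D (stdBasis 0) = stdBasis 0 + (A+C) • stdBasis 4 := by
  simp [fmap, stdBasis, Pi.single_apply]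
theorem fmap1 (A C D : ZMod 2) : fmap A C D (stdBasis 1) = stdBasis 1 + C • stdBasis 5 := by
  simp [fmap, stdBasis, Pi.single_apply]
theorem fmap2 (A C D : ZMod 2) : fmap A C D (stdBasis 2) = stdBasis 2 + D • stdBasis 6 := by
  simp [fmap, stdBasis, Pi.single_apply]
theorem fmap3 (A C D : ZMod 2) : fmap A C D (stdBasis 3) = stdBasis 3 := by
  simp [fmap, stdBasis, Pi.single_apply]
theorem fmap4 (A C D : ZMod 2) : fmap A C D (stdBasis 4) = stdBasis 4 := by
  simp [fmap, stdBasis, Pi.single_apply]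
theorem fmap5 (A C D : ZMod 2) : fmap A C D (stdBasis 5) = stdBasis 5 := by
  simp [fmap, stdBasis, Pi.single_apply]
theorem fmap6 (A C D : ZMod 2) : fmap A C D (stdBasis 6) = stdBasis 6 := by
  simp [fmap, stdBasis, Pi.single_apply]
theorem fmap7 (A C D : ZMod 2) : fmap A C D (stdBasis 7) = stdBasis 7 := by
  simp [fmap, stdBasis, Pi.single_apply]

theorem fmap_invol (A C D : ZMod 2) : fmap A C D ∘ₗ fmap A C D = LinearMap.id := by
  apply LinearMap.ext; intro v; funext j
  simp only [fmap, LinearMap.comp_apply, LinearMap.add_apply, LinearMap.id_apply,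
    LinearMap.smulRight_apply, LinearMap.proj_apply, Pi.add_apply, Pi.smul_apply,
    stdBasis, Pi.single_apply, smul_eq_mul,
    show ((0:Fin 8) = 4) = False from by simp, show ((0:Fin 8) = 5) = False from by simp,
    show ((0:Fin 8) = 6) = False from by simp, show ((1:Fin 8) = 4) = False from by simp,
    show ((1:Fin 8) = 5) = False from by simp, show ((1:Fin 8) = 6) = False from by simp,
    show ((2:Fin 8) = 4) = False from by simp, show ((2:Fin 8) = 5) = False from by simp,
    show ((2:Fin 8) = 6) = False from by simp,
    if_true, if_false, ite_false, mul_zero, mul_one, add_zero, zero_add]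
  split_ifs <;> ring_nf <;> simp [show (2:ZMod 2) = 0 from rfl]

theorem basisFun_eq_stdBasis (i : Fin 8) :
    (Pi.basisFun (ZMod 2) (Fin 8)) i = stdBasis i := by
  ext j; simp [stdBasis, Pi.single_apply, Pi.basisFun_apply]

/-!
STATEMENT 1.
With ∂ the linear map given by ∂w = x+y, ∂x = z, ∂y = z, ∂z = 0,
∂a = b+c+A·x+B·y, ∂b = d+C·z, ∂c = d+D·z, ∂d = 0, if ∂∘∂ = 0 then
there is a filtered basis change φ with φ⁻¹∘∂∘φ = ∂₀, where ∂₀ is the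
differential with parameters A = B = C = D = 0.
-/
theorem stmt_1 (A B C D : ZMod 2)
    (bd bd0 : (Fin 8 → ZMod 2) →ₗ[ZMod 2] (Fin 8 → ZMod 2))
    (ha : bd (stdBasis 0) =
      stdBasis 1 + stdBasis 2 + A • stdBasis 5 + B • stdBasis 6)
    (hb : bd (stdBasis 1) = stdBasis 3 + C • stdBasis 7)
    (hc : bd (stdBasis 2) = stdBasis 3 + D • stdBasis 7)
    (hd : bd (stdBasis 3) = 0)
    (hw : bd (stdBasis 4) = stdBasis 5 + stdBasis 6)
    (hx : bd (stdBasis 5) = stdBasis 7)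
    (hy : bd (stdBasis 6) = stdBasis 7)
    (hz : bd (stdBasis 7) = 0)
    (ha0 : bd0 (stdBasis 0) = stdBasis 1 + stdBasis 2)
    (hb0 : bd0 (stdBasis 1) = stdBasis 3)
    (hc0 : bd0 (stdBasis 2) = stdBasis 3)
    (hd0 : bd0 (stdBasis 3) = 0)
    (hw0 : bd0 (stdBasis 4) = stdBasis 5 + stdBasis 6)
    (hx0 : bd0 (stdBasis 5) = stdBasis 7)
    (hy0 : bd0 (stdBasis 6) = stdBasis 7)
    (hz0 : bd0 (stdBasis 7) = 0)
    (hdd : bd ∘ₗ bd = 0) :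
    ∃ φ : (Fin 8 → ZMod 2) ≃ₗ[ZMod 2] (Fin 8 → ZMod 2),
      FilteredBasisChange pos8 φ ∧
      φ.symm.toLinearMap ∘ₗ bd ∘ₗ φ.toLinearMap = bd0 := by
    classical
  have h2 : (2 : ZMod 2) = 0 := rfl
  have key : A + B + C + D = 0 := by
    have h0 := LinearMap.congr_fun hdd (stdBasis 0)
    simp only [LinearMap.comp_apply, LinearMap.zero_apply, ha, map_add, map_smul,
      hb, hc, hx, hy] at h0
    have h7 := congrFun h0 7
    simp [stdBasis, Pi.single_apply] at h7
    linear_combination h7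
  set f := fmap A C D with hf
  have hff : f ∘ₗ f = LinearMap.id := fmap_invol A C D
  have conj : bd ∘ₗ f = f ∘ₗ bd0 := by
    apply Module.Basis.ext (Pi.basisFun (ZMod 2) (Fin 8))
    intro i
    rw [basisFun_eq_stdBasis]
    simp only [LinearMap.comp_apply]
    fin_cases i
    · show bd (f (stdBasis 0)) = f (bd0 (stdBasis 0))
      rw [hf, fmap0, map_add, map_smul, ha, hw, ha0, map_add, fmap1, fmap2]
      funext j
      simp [stdBasis, Pi.single_apply]
      split_ifs
      any_goals (exfalso; omega)
      all_goals first | ring1 | linear_combination A*h2 | linear_combination key - D*h2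
    · show bd (f (stdBasis 1)) = f (bd0 (stdBasis 1))
      rw [hf, fmap1, map_add, map_smul, hb, hx, hb0, fmap3]
      funext j
      simp [stdBasis, Pi.single_apply]
      split_ifs
      any_goals (exfalso; omega)
      all_goals first | ring1 | linear_combination C*h2
    · show bd (f (stdBasis 2)) = f (bd0 (stdBasis 2))
      rw [hf, fmap2, map_add, map_smul, hc, hy, hc0, fmap3]
      funext j
      simp [stdBasis, Pi.single_apply]
      split_ifs
      any_goals (exfalso; omega)
      all_goals first | ring1 | linear_combination D*h2
    · show bd (f (stdBasis 3)) = f (bd0 (stdBasis 3))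
      rw [hf, fmap3, hd, hd0, map_zero]
    · show bd (f (stdBasis 4)) = f (bd0 (stdBasis 4))
      rw [hf, fmap4, hw, hw0, map_add, fmap5, fmap6]
    · show bd (f (stdBasis 5)) = f (bd0 (stdBasis 5))
      rw [hf, fmap5, hx, hx0, fmap7]
    · show bd (f (stdBasis 6)) = f (bd0 (stdBasis 6))
      rw [hf, fmap6, hy, hy0, fmap7]
    · show bd (f (stdBasis 7)) = f (bd0 (stdBasis 7))
      rw [hf, fmap7, hz, hz0, map_zero]
  refine ⟨LinearEquiv.ofLinear f f hff hff, ?_, ?_⟩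
  · intro g
    fin_cases g
    · show f (stdBasis 0) - stdBasis 0 ∈ _
      rw [hf, fmap0, add_sub_cancel_left]
      exact Submodule.smul_mem _ _ (Submodule.subset_span
        ⟨4, by decide, by decide, rfl⟩)
    · show f (stdBasis 1) - stdBasis 1 ∈ _
      rw [hf, fmap1, add_sub_cancel_left]
      exact Submodule.smul_mem _ _ (Submodule.subset_span
        ⟨5, by decide, by decide, rfl⟩)
    · show f (stdBasis 2) - stdBasis 2 ∈ _
      rw [hf, fmap2, add_sub_cancel_left]
      exact Submodule.smul_mem _ _ (Submodule.subset_span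
        ⟨6, by decide, by decide, rfl⟩)
    · show f (stdBasis 3) - stdBasis 3 ∈ _
      rw [hf, fmap3, sub_self]; exact Submodule.zero_mem _
    · show f (stdBasis 4) - stdBasis 4 ∈ _
      rw [hf, fmap4, sub_self]; exact Submodule.zero_mem _
    · show f (stdBasis 5) - stdBasis 5 ∈ _
      rw [hf, fmap5, sub_self]; exact Submodule.zero_mem _
    · show f (stdBasis 6) - stdBasis 6 ∈ _
      rw [hf, fmap6, sub_self]; exact Submodule.zero_mem _
    · show f (stdBasis 7) - stdBasis 7 ∈ _
      rw [hf, fmap7, sub_self]; exact Submodule.zero_mem _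
  · show f ∘ₗ (bd ∘ₗ f) = bd0
    rw [conj, ← LinearMap.comp_assoc, hff, LinearMap.id_comp]
end

section
/- Let V be the F₂-vector space with basis S = {x, y, z, v₂₁, u₂, w₂, v₂₃} and position function pos : S → ℤ×ℤ given by pos(x)=(0,1), pos(y)=(1,1), pos(z)=(1,0), pos(v₂₁)=(2,2), pos(u₂)=(2,3), pos(w₂)=(3,2), pos(v₂₃)=(3,3). For A,B,C,D,E ∈ F₂ let ∂ : V → V be the linear map with ∂y = x+z, ∂x = 0, ∂z = 0, ∂v₂₃ = u₂+w₂+E·y, ∂u₂ = v₂₁+A·x+B·z, ∂w₂ = v₂₁+C·x+D·z, ∂v₂₁ = 0. Then ∂∘∂ = 0 if and only if A+C+E = 0 and B+D+E = 0 in F₂; and in that case there exists a filtered basis change φ of V such that φ⁻¹∘∂∘φ equals the differential ∂₀ with parameters A = B = C = D = E = 0. -/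
/-- Position function for the basis {x, y, z, v₂₁, u₂, w₂, v₂₃}
(indices x=0, y=1, z=2, v₂₁=3, u₂=4, w₂=5, v₂₃=6):
pos(x)=(0,1), pos(y)=(1,1), pos(z)=(1,0), pos(v₂₁)=(2,2), pos(u₂)=(2,3),
pos(w₂)=(3,2), pos(v₂₃)=(3,3). -/
def posIII : Fin 7 → ℤ × ℤ :=
  ![(0,1), (1,1), (1,0), (2,2), (2,3), (3,2), (3,3)]

/-- auxiliary filtered-basis-change map: `v ↦ v + v₃ • c + v₅ • d`. -/
def fmapIII (c d : Fin 7 → ZMod 2) : (Fin 7 → ZMod 2) →ₗ[ZMod 2] (Fin 7 → ZMod 2) :=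
  LinearMap.id
    + (LinearMap.proj 3 : (Fin 7 → ZMod 2) →ₗ[ZMod 2] ZMod 2).smulRight c
    + (LinearMap.proj 5 : (Fin 7 → ZMod 2) →ₗ[ZMod 2] ZMod 2).smulRight d

lemma fmapIII_apply (c d : Fin 7 → ZMod 2) (v : Fin 7 → ZMod 2) :
    fmapIII c d v = v + v 3 • c + v 5 • d := rfl

lemma add_self_vec (w : Fin 7 → ZMod 2) : w + w = 0 :=
  funext fun _ => CharTwo.add_self_eq_zero _

lemma fmapIII_inv (c d : Fin 7 → ZMod 2) (hc3 : c 3 = 0) (hc5 : c 5 = 0)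
    (hd3 : d 3 = 0) (hd5 : d 5 = 0) : Function.Involutive (fmapIII c d) := by
  intro v
  have h3 : (fmapIII c d v) 3 = v 3 := by
    simp [fmapIII_apply, hc3, hd3]
  have h5 : (fmapIII c d v) 5 = v 5 := by
    simp [fmapIII_apply, hc5, hd5]
  rw [fmapIII_apply, h3, h5, fmapIII_apply]
  calc v + v 3 • c + v 5 • d + v 3 • c + v 5 • d
      = v + ((v 3 • c + v 3 • c) + (v 5 • d + v 5 • d)) := by abel
    _ = v := by rw [add_self_vec, add_self_vec, add_zero, add_zero]

theorem stmt_3 (A B C D E : ZMod 2)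
    (bd bd0 : (Fin 7 → ZMod 2) →ₗ[ZMod 2] (Fin 7 → ZMod 2))
    (hx : bd (stdBasis 0) = 0)
    (hy : bd (stdBasis 1) = stdBasis 0 + stdBasis 2)
    (hz : bd (stdBasis 2) = 0)
    (hv21 : bd (stdBasis 3) = 0)
    (hu2 : bd (stdBasis 4) = stdBasis 3 + A • stdBasis 0 + B • stdBasis 2)
    (hw2 : bd (stdBasis 5) = stdBasis 3 + C • stdBasis 0 + D • stdBasis 2)
    (hv23 : bd (stdBasis 6) = stdBasis 4 + stdBasis 5 + E • stdBasis 1)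
    (hx' : bd0 (stdBasis 0) = 0)
    (hy' : bd0 (stdBasis 1) = stdBasis 0 + stdBasis 2)
    (hz' : bd0 (stdBasis 2) = 0)
    (hv21' : bd0 (stdBasis 3) = 0)
    (hu2' : bd0 (stdBasis 4) = stdBasis 3)
    (hw2' : bd0 (stdBasis 5) = stdBasis 3)
    (hv23' : bd0 (stdBasis 6) = stdBasis 4 + stdBasis 5) :
    (bd ∘ₗ bd = 0 ↔ (A + C + E = 0 ∧ B + D + E = 0)) ∧
    (bd ∘ₗ bd = 0 →
      ∃ φ : (Fin 7 → ZMod 2) ≃ₗ[ZMod 2] (Fin 7 → ZMod 2),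
        FilteredBasisChange posIII φ ∧
        φ.symm.toLinearMap ∘ₗ bd ∘ₗ φ.toLinearMap = bd0) := by
  classical
  have key : bd ∘ₗ bd = 0 ↔ (A + C + E = 0 ∧ B + D + E = 0) := by
    constructor
    · intro h
      have h6 := LinearMap.congr_fun h (stdBasis 6)
      rw [LinearMap.comp_apply, hv23, map_add, map_add, map_smul, hu2, hw2, hy] at h6
      have h0 := congrFun h6 0
      have h2 := congrFun h6 2
      simp [stdBasis, Pi.single_apply] at h0 h2
      exact ⟨by linear_combination h0, by linear_combination h2⟩
    · rintro ⟨h1, h2⟩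
      apply Module.Basis.ext (Pi.basisFun (ZMod 2) (Fin 7))
      intro i
      fin_cases i
      · show (bd ∘ₗ bd) ((Pi.basisFun (ZMod 2) (Fin 7)) 0) = 0
        simp [Pi.basisFun_apply, show Pi.single (0 : Fin 7) (1 : ZMod 2) = stdBasis 0 from rfl,
          hx]
      · show (bd ∘ₗ bd) ((Pi.basisFun (ZMod 2) (Fin 7)) 1) = 0
        simp [Pi.basisFun_apply, show Pi.single (1 : Fin 7) (1 : ZMod 2) = stdBasis 1 from rfl,
          hy, hx, hz]
      · show (bd ∘ₗ bd) ((Pi.basisFun (ZMod 2) (Fin 7)) 2) = 0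
        simp [Pi.basisFun_apply, show Pi.single (2 : Fin 7) (1 : ZMod 2) = stdBasis 2 from rfl,
          hz]
      · show (bd ∘ₗ bd) ((Pi.basisFun (ZMod 2) (Fin 7)) 3) = 0
        simp [Pi.basisFun_apply, show Pi.single (3 : Fin 7) (1 : ZMod 2) = stdBasis 3 from rfl,
          hv21]
      · show (bd ∘ₗ bd) ((Pi.basisFun (ZMod 2) (Fin 7)) 4) = 0
        simp [Pi.basisFun_apply, show Pi.single (4 : Fin 7) (1 : ZMod 2) = stdBasis 4 from rfl,
          hu2, hv21, hx, hz]
      · show (bd ∘ₗ bd) ((Pi.basisFun (ZMod 2) (Fin 7)) 5) = 0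
        simp [Pi.basisFun_apply, show Pi.single (5 : Fin 7) (1 : ZMod 2) = stdBasis 5 from rfl,
          hw2, hv21, hx, hz]
      · show (bd ∘ₗ bd) ((Pi.basisFun (ZMod 2) (Fin 7)) 6) = 0
        rw [LinearMap.comp_apply, Pi.basisFun_apply,
          show Pi.single (6 : Fin 7) (1 : ZMod 2) = stdBasis 6 from rfl, hv23,
          map_add, map_add, map_smul, hu2, hw2, hy]
        funext j
        fin_cases j <;>
          simp [stdBasis, Pi.single_apply] <;>
          first
            | rfl
            | linear_combination h1
            | linear_combination h2
            | decide
  refine ⟨key, fun h => ?_⟩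
  have htwo : (2 : ZMod 2) = 0 := rfl
  obtain ⟨h1, h2⟩ := key.mp h
  set c : Fin 7 → ZMod 2 := A • stdBasis 0 + B • stdBasis 2 with hcdef
  set d : Fin 7 → ZMod 2 := E • stdBasis 1 with hddef
  have hc3 : c 3 = 0 := by simp [hcdef, stdBasis, Pi.single_apply]
  have hc5 : c 5 = 0 := by simp [hcdef, stdBasis, Pi.single_apply]
  have hd3 : d 3 = 0 := by simp [hddef, stdBasis, Pi.single_apply]
  have hd5 : d 5 = 0 := by simp [hddef, stdBasis, Pi.single_apply]
  have hinv := fmapIII_inv c d hc3 hc5 hd3 hd5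
  -- values of f on the standard basis
  have hfe : ∀ i : Fin 7, fmapIII c d (stdBasis i)
      = stdBasis i + (stdBasis i 3) • c + (stdBasis i 5) • d := fun i => rfl
  have hf0 : fmapIII c d (stdBasis 0) = stdBasis 0 := by
    rw [hfe]; simp [stdBasis, Pi.single_apply]
  have hf1 : fmapIII c d (stdBasis 1) = stdBasis 1 := by
    rw [hfe]; simp [stdBasis, Pi.single_apply]
  have hf2 : fmapIII c d (stdBasis 2) = stdBasis 2 := by
    rw [hfe]; simp [stdBasis, Pi.single_apply]
  have hf3 : fmapIII c d (stdBasis 3) = stdBasis 3 + c := by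
    rw [hfe]; simp [stdBasis, Pi.single_apply]
  have hf4 : fmapIII c d (stdBasis 4) = stdBasis 4 := by
    rw [hfe]; simp [stdBasis, Pi.single_apply]
  have hf5 : fmapIII c d (stdBasis 5) = stdBasis 5 + d := by
    rw [hfe]; simp [stdBasis, Pi.single_apply]
  have hf6 : fmapIII c d (stdBasis 6) = stdBasis 6 := by
    rw [hfe]; simp [stdBasis, Pi.single_apply]
  have hcomm : bd ∘ₗ fmapIII c d = fmapIII c d ∘ₗ bd0 := by
    apply Module.Basis.ext (Pi.basisFun (ZMod 2) (Fin 7))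
    intro i
    rw [LinearMap.comp_apply, LinearMap.comp_apply, Pi.basisFun_apply,
      show (Pi.single i 1 : Fin 7 → ZMod 2) = stdBasis i from rfl]
    fin_cases i
    · show bd (fmapIII c d (stdBasis 0)) = fmapIII c d (bd0 (stdBasis 0))
      rw [hf0, hx, hx', map_zero]
    · show bd (fmapIII c d (stdBasis 1)) = fmapIII c d (bd0 (stdBasis 1))
      rw [hf1, hy, hy', map_add, hf0, hf2]
    · show bd (fmapIII c d (stdBasis 2)) = fmapIII c d (bd0 (stdBasis 2))
      rw [hf2, hz, hz', map_zero]
    · show bd (fmapIII c d (stdBasis 3)) = fmapIII c d (bd0 (stdBasis 3))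
      rw [hf3, map_add, hv21, hv21', map_zero, hcdef, map_add, map_smul, map_smul,
        hx, hz, smul_zero, smul_zero, add_zero, zero_add]
    · show bd (fmapIII c d (stdBasis 4)) = fmapIII c d (bd0 (stdBasis 4))
      rw [hf4, hu2, hu2', hf3, hcdef, add_assoc]
    · show bd (fmapIII c d (stdBasis 5)) = fmapIII c d (bd0 (stdBasis 5))
      rw [hf5, map_add, hw2, hddef, map_smul, hy, hw2', hf3, hcdef]
      funext j
      fin_cases j <;>
        simp [stdBasis, Pi.single_apply] <;>
        first
          | rfl
          | linear_combination h1
          | linear_combination h2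
          | linear_combination h1 - A * htwo
          | linear_combination h2 - B * htwo
          | decide
    · show bd (fmapIII c d (stdBasis 6)) = fmapIII c d (bd0 (stdBasis 6))
      rw [hf6, hv23, hv23', map_add, hf4, hf5, hddef]
      abel
  refine ⟨LinearEquiv.ofInvolutive (fmapIII c d) hinv, ?_, ?_⟩
  · intro g
    fin_cases g
    · show fmapIII c d (stdBasis 0) - stdBasis 0 ∈ _
      rw [hf0, sub_self]; exact zero_mem _
    · show fmapIII c d (stdBasis 1) - stdBasis 1 ∈ _
      rw [hf1, sub_self]; exact zero_mem _
    · show fmapIII c d (stdBasis 2) - stdBasis 2 ∈ _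
      rw [hf2, sub_self]; exact zero_mem _
    · show fmapIII c d (stdBasis 3) - stdBasis 3 ∈ _
      rw [hf3, add_sub_cancel_left, hcdef]
      exact Submodule.add_mem _
        (Submodule.smul_mem _ _ (Submodule.subset_span ⟨0, by decide, by decide, rfl⟩))
        (Submodule.smul_mem _ _ (Submodule.subset_span ⟨2, by decide, by decide, rfl⟩))
    · show fmapIII c d (stdBasis 4) - stdBasis 4 ∈ _
      rw [hf4, sub_self]; exact zero_mem _
    · show fmapIII c d (stdBasis 5) - stdBasis 5 ∈ _
      rw [hf5, add_sub_cancel_left, hddef]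
      exact Submodule.smul_mem _ _ (Submodule.subset_span ⟨1, by decide, by decide, rfl⟩)
    · show fmapIII c d (stdBasis 6) - stdBasis 6 ∈ _
      rw [hf6, sub_self]; exact zero_mem _
  · apply LinearMap.ext
    intro v
    have hv := LinearMap.congr_fun hcomm v
    simp only [LinearMap.comp_apply] at hv ⊢
    show fmapIII c d (bd (fmapIII c d v)) = bd0 v
    rw [hv]
    exact hinv _
end

section
/- Fix an integer m ≥ 1 and let R = F₂[U, U⁻¹]. With M(m) and ∂ as follows: M(m) is the free R-module with basis x₁,…,x_{2m}, y₁,…,y_{4m−1}, z₁,…,z_{2m}, and u_{p,1}, u_{p,2}, v_{p,1},…,v_{p,4}, w_{p,1}, w_{p,2} for 1 ≤ p ≤ m; ∂x₁ = 0, ∂x_k = y_{k−1} for 2 ≤ k ≤ 2m; ∂y_l = 0 for 1 ≤ l ≤ 2m−1, ∂y_{2m+l−1} = z_l + U·x_l for 1 ≤ l ≤ 2m; ∂z₁ = 0, ∂z_k = U·y_{k−1} for 2 ≤ k ≤ 2m; ∂u_{p,i} = v_{p,i}, ∂v_{p,i} = 0, ∂v_{p,i+2} = w_{p,i} + U·u_{p,i},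 ∂w_{p,i} = U·v_{p,i} for i = 1, 2. Let D₂ be the R-submodule spanned by all basis elements other than x₁, y_{2m}, z₁. Then (D₂, ∂) is an acyclic complex: the kernel of ∂ restricted to D₂ equals ∂(D₂). -/
/-!
STATEMENT 12.
Fix m ≥ 1, R = F₂[U, U⁻¹], and let (M(m), ∂) be as in the paper's proof of
Theorem 1.3 (see the hypotheses below; basis conventions as in `Idx`).  Let D₂
be the R-submodule spanned by all basis elements other than x₁, y_{2m}, z₁.
Then (D₂, ∂) is an acyclic complex: the kernel of ∂ restricted to D₂ equals
∂(D₂), i.e. ∂(D₂) = D₂ ⊓ ker ∂.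
-/

/-- Basis index type of the module M(m) (0-based indices: `Idx.x k` is x_{k+1}
for `k : Fin (2m)`, `Idx.y l` is y_{l+1} for `l : Fin (4m−1)`, `Idx.z k` is
z_{k+1}, `Idx.u p i` is u_{p+1,i+1}, `Idx.v p i` is v_{p+1,i+1}, `Idx.w p i`
is w_{p+1,i+1}). -/
inductive Idx (m : ℕ) where
  | x : Fin (2 * m) → Idx m
  | y : Fin (4 * m - 1) → Idx m
  | z : Fin (2 * m) → Idx m
  | u : Fin m → Fin 2 → Idx m
  | v : Fin m → Fin 4 → Idx m
  | w : Fin m → Fin 2 → Idx m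
  deriving DecidableEq

/-- The ground ring R = F₂[U, U⁻¹]. -/
abbrev R2 : Type := LaurentPolynomial (ZMod 2)

/-- The element U ∈ R. -/
noncomputable def U : R2 := LaurentPolynomial.T 1

/-- The basis vector of the free module `Idx m →₀ R2` at index `i`. -/
noncomputable def e {m : ℕ} (i : Idx m) : Idx m →₀ R2 := Finsupp.single i 1

/-- The three distinguished basis indices x₁, y_{2m}, z₁ (0-based: x-index 0,
y-index 2m−1, z-index 0). -/
def special (m : ℕ) (hm : 1 ≤ m) : Set (Idx m) :=
  {Idx.x ⟨0, by omega⟩, Idx.y ⟨2 * m - 1, by omega⟩, Idx.z ⟨0, by omega⟩}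

/-- D₂: the R-submodule spanned by all basis elements other than x₁, y_{2m}, z₁. -/
noncomputable def D2 (m : ℕ) (hm : 1 ≤ m) : Submodule R2 (Idx m →₀ R2) :=
  Submodule.span R2 {v | ∃ i ∉ special m hm, v = e i}

/-- The contracting homotopy on basis elements. -/
noncomputable def Hfun (m : ℕ) : Idx m → (Idx m →₀ R2)
  | .x _ => 0
  | .y l => if h : l.val + 1 < 2 * m then e (.x ⟨l.val + 1, h⟩) else 0
  | .z k => if _ : 0 < k.val then
      e (.y ⟨2 * m - 1 + k.val, by have := k.isLt; omega⟩) else 0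
  | .u _ _ => 0
  | .v p j => if h : j.val < 2 then e (.u p ⟨j.val, h⟩) else 0
  | .w p j => e (.v p ⟨j.val + 2, by have := j.isLt; omega⟩)

/-- The contracting homotopy as a linear map. -/
noncomputable def Hmap (m : ℕ) : (Idx m →₀ R2) →ₗ[R2] (Idx m →₀ R2) :=
  Finsupp.lsum R2 (fun i => LinearMap.toSpanSingleton R2 _ (Hfun m i))

lemma Hmap_e {m : ℕ} (i : Idx m) : Hmap m (e i) = Hfun m i := by
  simp [Hmap, e, LinearMap.toSpanSingleton_apply]

lemma two_eq_zero_R2 : (2 : R2) = 0 := by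
  have h := map_natCast (algebraMap (ZMod 2) R2) 2
  simp at h
  rw [← h, show (2:ZMod 2) = 0 from rfl, map_zero]

lemma add_self_R2 {m : ℕ} (v : Idx m →₀ R2) : v + v = 0 := by
  rw [← two_smul R2 v, two_eq_zero_R2, zero_smul]

lemma e_mem_D2 {m : ℕ} {hm : 1 ≤ m} {i : Idx m} (h : i ∉ special m hm) :
    e i ∈ D2 m hm := Submodule.subset_span ⟨i, h, rfl⟩

lemma nx {m : ℕ} {hm : 1 ≤ m} {k : Fin (2 * m)} (h : 0 < k.val) :
    Idx.x k ∉ special m hm := by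
  simp only [special, Set.mem_insert_iff, Set.mem_singleton_iff]
  rintro (h' | h' | h') <;> simp_all [Fin.ext_iff] <;> omega

lemma ny {m : ℕ} {hm : 1 ≤ m} {l : Fin (4 * m - 1)} (h : l.val ≠ 2 * m - 1) :
    Idx.y l ∉ special m hm := by
  simp only [special, Set.mem_insert_iff, Set.mem_singleton_iff]
  rintro (h' | h' | h') <;> simp_all [Fin.ext_iff]

lemma nz {m : ℕ} {hm : 1 ≤ m} {k : Fin (2 * m)} (h : 0 < k.val) :
    Idx.z k ∉ special m hm := by
  simp only [special, Set.mem_insert_iff, Set.mem_singleton_iff]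
  rintro (h' | h' | h') <;> simp_all [Fin.ext_iff] <;> omega

lemma nu {m : ℕ} {hm : 1 ≤ m} (p : Fin m) (j : Fin 2) :
    Idx.u p j ∉ special m hm := by
  simp only [special, Set.mem_insert_iff, Set.mem_singleton_iff]
  rintro (h' | h' | h') <;> simp_all

lemma nv {m : ℕ} {hm : 1 ≤ m} (p : Fin m) (j : Fin 4) :
    Idx.v p j ∉ special m hm := by
  simp only [special, Set.mem_insert_iff, Set.mem_singleton_iff]
  rintro (h' | h' | h') <;> simp_all

lemma nw {m : ℕ} {hm : 1 ≤ m} (p : Fin m) (j : Fin 2) :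
    Idx.w p j ∉ special m hm := by
  simp only [special, Set.mem_insert_iff, Set.mem_singleton_iff]
  rintro (h' | h' | h') <;> simp_all

theorem stmt_12 (m : ℕ) (hm : 1 ≤ m)
    (bd : (Idx m →₀ R2) →ₗ[R2] (Idx m →₀ R2))
    -- ∂x₁ = 0
    (hx1 : ∀ k : Fin (2 * m), k.val = 0 → bd (e (.x k)) = 0)
    -- ∂x_k = y_{k−1} for 2 ≤ k ≤ 2m (0-based: y-index + 1 = x-index)
    (hx : ∀ (k : Fin (2 * m)) (l : Fin (4 * m - 1)), l.val + 1 = k.val →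
      bd (e (.x k)) = e (.y l))
    -- ∂y_l = 0 for 1 ≤ l ≤ 2m−1 (0-based: l.val + 1 ≤ 2m − 1)
    (hy0 : ∀ l : Fin (4 * m - 1), l.val + 2 ≤ 2 * m → bd (e (.y l)) = 0)
    -- ∂y_{2m+l−1} = z_l + U·x_l for 1 ≤ l ≤ 2m
    (hy : ∀ (l : Fin (4 * m - 1)) (k : Fin (2 * m)), l.val + 1 = 2 * m + k.val →
      bd (e (.y l)) = e (.z k) + U • e (.x k))
    -- ∂z₁ = 0
    (hz1 : ∀ k : Fin (2 * m), k.val = 0 → bd (e (.z k)) = 0)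
    -- ∂z_k = U·y_{k−1} for 2 ≤ k ≤ 2m
    (hz : ∀ (k : Fin (2 * m)) (l : Fin (4 * m - 1)), l.val + 1 = k.val →
      bd (e (.z k)) = U • e (.y l))
    -- ∂u_{p,i} = v_{p,i} for i = 1, 2
    (hu : ∀ (p : Fin m) (i : Fin 2) (i' : Fin 4), i'.val = i.val →
      bd (e (.u p i)) = e (.v p i'))
    -- ∂v_{p,i} = 0 for i = 1, 2
    (hv0 : ∀ (p : Fin m) (i : Fin 4), i.val < 2 → bd (e (.v p i)) = 0)
    -- ∂v_{p,i+2} = w_{p,i} + U·u_{p,i} for i = 1, 2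
    (hv : ∀ (p : Fin m) (i : Fin 4) (i' : Fin 2), i.val = i'.val + 2 →
      bd (e (.v p i)) = e (.w p i') + U • e (.u p i'))
    -- ∂w_{p,i} = U·v_{p,i} for i = 1, 2
    (hw : ∀ (p : Fin m) (i : Fin 2) (i' : Fin 4), i'.val = i.val →
      bd (e (.w p i)) = U • e (.v p i'))
    :
    Submodule.map bd (D2 m hm) = D2 m hm ⊓ LinearMap.ker bd := by
  -- the master computation on each non-special basis vector
  have key : ∀ i : Idx m, i ∉ special m hm →
      bd (e i) ∈ D2 m hm ∧ bd (bd (e i)) = 0 ∧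
        bd (Hfun m i) + Hmap m (bd (e i)) = e i := by
    intro i hi
    cases i with
    | x k =>
        have hk2 := k.isLt
        have hk : 0 < k.val := by
          by_contra h
          refine hi ?_
          have hk0 : k = ⟨0, by omega⟩ := Fin.ext (show (k : ℕ) = 0 by omega)
          rw [hk0]
          exact Set.mem_insert _ _
        set l : Fin (4 * m - 1) := ⟨k.val - 1, by omega⟩ with hl
        have hlv : (l : ℕ) = k.val - 1 := rfl
        have hbd : bd (e (.x k)) = e (.y l) := hx k l (by omega)
        refine ⟨hbd ▸ e_mem_D2 (ny (by omega)), ?_, ?_⟩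
        · rw [hbd, hy0 l (by omega)]
        · rw [hbd, Hmap_e]
          simp only [Hfun]
          have hcond : (l : ℕ) + 1 < 2 * m := by omega
          rw [map_zero, zero_add, dif_pos hcond]
          have : (⟨(l : ℕ) + 1, hcond⟩ : Fin (2 * m)) = k :=
            Fin.ext (show (l : ℕ) + 1 = (k : ℕ) by omega)
          rw [this]
    | y l =>
        have hl2 := l.isLt
        have hlne : l.val ≠ 2 * m - 1 := by
          intro h
          refine hi ?_
          have hl0 : l = ⟨2 * m - 1, by omega⟩ := Fin.ext h
          rw [hl0]
          exact Set.mem_insert_iff.mpr (Or.inr (Set.mem_insert _ _))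
        rcases lt_or_gt_of_ne hlne with hlt | hgt
        · -- l.val < 2m - 1
          have hbd : bd (e (.y l)) = 0 := hy0 l (by omega)
          refine ⟨hbd ▸ Submodule.zero_mem _, by rw [hbd, map_zero], ?_⟩
          rw [hbd, map_zero, add_zero]
          simp only [Hfun]
          have hcond : (l : ℕ) + 1 < 2 * m := by omega
          rw [dif_pos hcond]
          exact hx ⟨l.val + 1, by omega⟩ l rfl
        · -- l.val ≥ 2m
          have hge : 2 * m ≤ l.val := by omega
          set k : Fin (2 * m) := ⟨l.val - 2 * m + 1, by omega⟩ with hk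
          have hkv : (k : ℕ) = l.val - 2 * m + 1 := rfl
          have hbd : bd (e (.y l)) = e (.z k) + U • e (.x k) :=
            hy l k (by omega)
          set l0 : Fin (4 * m - 1) := ⟨k.val - 1, by omega⟩ with hl0
          have hl0v : (l0 : ℕ) = k.val - 1 := rfl
          refine ⟨hbd ▸ Submodule.add_mem _ (e_mem_D2 (nz (by omega)))
            (Submodule.smul_mem _ _ (e_mem_D2 (nx (by omega)))), ?_, ?_⟩
          · rw [hbd, map_add, map_smul, hz k l0 (by omega), hx k l0 (by omega)]
            exact add_self_R2 _
          · rw [hbd]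
            simp only [Hfun]
            rw [dif_neg (by omega), map_zero, zero_add, map_add, map_smul,
              Hmap_e, Hmap_e]
            simp only [Hfun]
            have hck : 0 < (k : ℕ) := by omega
            rw [dif_pos hck, smul_zero, add_zero]
            have : (⟨2 * m - 1 + (k : ℕ), by omega⟩ : Fin (4 * m - 1)) = l :=
              Fin.ext (show 2 * m - 1 + (k : ℕ) = (l : ℕ) by omega)
            rw [this]
    | z k =>
        have hk2 := k.isLt
        have hk : 0 < k.val := by
          by_contra h
          refine hi ?_
          have hk0 : k = ⟨0, by omega⟩ := Fin.ext (show (k : ℕ) = 0 by omega)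
          rw [hk0]
          right; right; rfl
        set l0 : Fin (4 * m - 1) := ⟨k.val - 1, by omega⟩ with hl0
        have hl0v : (l0 : ℕ) = k.val - 1 := rfl
        have hbd : bd (e (.z k)) = U • e (.y l0) := hz k l0 (by omega)
        refine ⟨hbd ▸ Submodule.smul_mem _ _ (e_mem_D2 (ny (by omega))), ?_, ?_⟩
        · rw [hbd, map_smul, hy0 l0 (by omega), smul_zero]
        · rw [hbd]
          simp only [Hfun]
          rw [dif_pos hk, map_smul, Hmap_e]
          simp only [Hfun]
          have hcond : (l0 : ℕ) + 1 < 2 * m := by omega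
          rw [dif_pos hcond]
          rw [hy ⟨2 * m - 1 + k.val, by omega⟩ k
            (show 2 * m - 1 + (k : ℕ) + 1 = 2 * m + (k : ℕ) by omega)]
          have hxk : (⟨(l0 : ℕ) + 1, hcond⟩ : Fin (2 * m)) = k :=
            Fin.ext (show (l0 : ℕ) + 1 = (k : ℕ) by omega)
          rw [hxk, add_assoc, add_self_R2, add_zero]
    | u p j =>
        have hj := j.isLt
        set j4 : Fin 4 := ⟨j.val, by omega⟩ with hj4
        have hj4v : (j4 : ℕ) = j.val := rfl
        have hbd : bd (e (.u p j)) = e (.v p j4) := hu p j j4 rfl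
        refine ⟨hbd ▸ e_mem_D2 (nv p j4), ?_, ?_⟩
        · rw [hbd, hv0 p j4 (by omega)]
        · rw [hbd, Hmap_e]
          simp only [Hfun]
          have hcond : (j4 : ℕ) < 2 := by omega
          rw [map_zero, zero_add, dif_pos hcond]
    | v p j =>
        have hj := j.isLt
        rcases Nat.lt_or_ge j.val 2 with hlt | hge
        · have hbd : bd (e (.v p j)) = 0 := hv0 p j hlt
          refine ⟨hbd ▸ Submodule.zero_mem _, by rw [hbd, map_zero], ?_⟩
          rw [hbd, map_zero, add_zero]
          simp only [Hfun]
          rw [dif_pos hlt]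
          exact hu p ⟨j.val, hlt⟩ j rfl
        · set j2 : Fin 2 := ⟨j.val - 2, by omega⟩ with hj2
          have hj2v : (j2 : ℕ) = j.val - 2 := rfl
          have hbd : bd (e (.v p j)) = e (.w p j2) + U • e (.u p j2) :=
            hv p j j2 (by omega)
          set j4 : Fin 4 := ⟨j2.val, by omega⟩ with hj4
          have hj4v : (j4 : ℕ) = j2.val := rfl
          refine ⟨hbd ▸ Submodule.add_mem _ (e_mem_D2 (nw p j2))
            (Submodule.smul_mem _ _ (e_mem_D2 (nu p j2))), ?_, ?_⟩
          · rw [hbd, map_add, map_smul, hw p j2 j4 rfl, hu p j2 j4 rfl]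
            exact add_self_R2 _
          · rw [hbd]
            simp only [Hfun]
            rw [dif_neg (by omega), map_zero, zero_add, map_add, map_smul,
              Hmap_e, Hmap_e]
            simp only [Hfun]
            rw [smul_zero, add_zero]
            have : (⟨(j2 : ℕ) + 2, by omega⟩ : Fin 4) = j :=
              Fin.ext (show (j2 : ℕ) + 2 = (j : ℕ) by omega)
            rw [this]
    | w p j =>
        have hj := j.isLt
        set j4 : Fin 4 := ⟨j.val, by omega⟩ with hj4
        have hj4v : (j4 : ℕ) = j.val := rfl
        have hbd : bd (e (.w p j)) = U • e (.v p j4) := hw p j j4 rfl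
        refine ⟨hbd ▸ Submodule.smul_mem _ _ (e_mem_D2 (nv p j4)), ?_, ?_⟩
        · rw [hbd, map_smul, hv0 p j4 (by omega), smul_zero]
        · rw [hbd]
          simp only [Hfun]
          rw [map_smul, Hmap_e]
          simp only [Hfun]
          have hcond : (j4 : ℕ) < 2 := by omega
          rw [dif_pos hcond]
          rw [hv p ⟨j.val + 2, by omega⟩ j rfl]
          rw [add_assoc, add_self_R2, add_zero]
  -- Hfun always lands in D2
  have hHD2 : ∀ i : Idx m, Hfun m i ∈ D2 m hm := by
    intro i
    cases i with
    | x k => exact Submodule.zero_mem _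
    | y l =>
        simp only [Hfun]
        split
        · rename_i h
          exact e_mem_D2 (nx (show 0 < (l : ℕ) + 1 by omega))
        · exact Submodule.zero_mem _
    | z k =>
        simp only [Hfun]
        split
        · rename_i h
          have := k.isLt
          exact e_mem_D2 (ny (show 2 * m - 1 + (k : ℕ) ≠ 2 * m - 1 by omega))
        · exact Submodule.zero_mem _
    | u p j => exact Submodule.zero_mem _
    | v p j =>
        simp only [Hfun]
        split
        · exact e_mem_D2 (nu p _)
        · exact Submodule.zero_mem _
    | w p j => exact e_mem_D2 (nv p _)
  apply le_antisymm
  · rw [D2, Submodule.map_span, Submodule.span_le]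
    rintro _ ⟨_, ⟨i, hi, rfl⟩, rfl⟩
    exact ⟨(key i hi).1, (key i hi).2.1⟩
  · rintro v ⟨hv2, hker⟩
    have hker' : bd v = 0 := hker
    -- the homotopy identity on D2
    have hL : ∀ w ∈ D2 m hm,
        (bd ∘ₗ Hmap m + Hmap m ∘ₗ bd) w = w := by
      intro w hw
      have : D2 m hm ≤ LinearMap.ker
          (bd ∘ₗ Hmap m + Hmap m ∘ₗ bd - LinearMap.id) := by
        rw [D2, Submodule.span_le]
        rintro _ ⟨i, hi, rfl⟩
        simp only [SetLike.mem_coe, LinearMap.mem_ker, LinearMap.sub_apply,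
          LinearMap.add_apply, LinearMap.comp_apply, LinearMap.id_apply]
        rw [Hmap_e, (key i hi).2.2]
        exact sub_self _
      have h0 := this hw
      rw [LinearMap.mem_ker, LinearMap.sub_apply, LinearMap.id_apply,
        sub_eq_zero] at h0
      exact h0
    have hmem : Hmap m v ∈ D2 m hm := by
      have : Submodule.map (Hmap m) (D2 m hm) ≤ D2 m hm := by
        rw [D2, Submodule.map_span, Submodule.span_le]
        rintro _ ⟨_, ⟨i, hi, rfl⟩, rfl⟩
        rw [Hmap_e]
        exact hHD2 i
      exact this ⟨v, hv2, rfl⟩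
    refine ⟨Hmap m v, hmem, ?_⟩
    have := hL v hv2
    simp only [LinearMap.add_apply, LinearMap.comp_apply] at this
    rw [hker', map_zero, add_zero] at this
    exact this
end
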